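/- arXiv:1103.2316 — 4 statements merged into one kernel-verified Lean document; each statement's English description precedes it below -/
import Mathlib

section
/- Let S = {S_k} and T = {T_k} be two n-qubit stabilizer groups (here two operators differing by a sign are distinct), with stabilizer states |S⟩ and |T⟩. Define S⁺ = S ∩ T and S⁻ = S ∩ (−T) = {s ∈ S : −s ∈ T}, and write |S⁺| = 2^p and |S⁺ ∪ S⁻| = 2^q. Then |⟨S|T⟩|² = (|S⁺| − |S⁻|)/2^n = (2^{p+1} − 2^q)/2^n; consequently q ∈ {p, p+1}, and |⟨S|T⟩|² = 2^{q−n} if q = p while |⟨S|T⟩|² = 0 if q = p+1. -/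
/-!
STATEMENT 14: Let S and T be two n-qubit stabilizer groups (operators differing by a
sign counted as distinct), with stabilizer states |S⟩, |T⟩ (characterized by
|S⟩⟨S| = 2^{−n} Σ_k S_k and likewise for T).  With S⁺ = S ∩ T, S⁻ = {s ∈ S : −s ∈ T},
|S⁺| = 2^p and |S⁺ ∪ S⁻| = 2^q:
|⟨S|T⟩|² = (|S⁺| − |S⁻|)/2^n = (2^{p+1} − 2^q)/2^n, hence q ∈ {p, p+1}, and
|⟨S|T⟩|² = 2^{q−n} if q = p while |⟨S|T⟩|² = 0 if q = p+1.
-/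

noncomputable section

/-- The Pauli matrix σ_x. -/
def sx : Matrix (Fin 2) (Fin 2) ℂ := !![0, 1; 1, 0]

/-- The Pauli matrix σ_y. -/
def sy : Matrix (Fin 2) (Fin 2) ℂ := !![0, -Complex.I; Complex.I, 0]

/-- The Pauli matrix σ_z. -/
def sz : Matrix (Fin 2) (Fin 2) ℂ := !![1, 0; 0, -1]

/-- `M` is an element of the n-qubit Pauli group: M = c·P₁⊗⋯⊗Pₙ with c ∈ {1,−1,i,−i}
and each Pⱼ ∈ {𝟙, σx, σy, σz}.  The n-qubit space is indexed by `Fin n → Fin 2`, and the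
tensor product is written entrywise: (P₁⊗⋯⊗Pₙ)(x,y) = Π_j Pⱼ(x_j, y_j). -/
def IsPauli (n : ℕ) (M : Matrix (Fin n → Fin 2) (Fin n → Fin 2) ℂ) : Prop :=
  ∃ (c : ℂ) (P : Fin n → Matrix (Fin 2) (Fin 2) ℂ),
    (c = 1 ∨ c = -1 ∨ c = Complex.I ∨ c = -Complex.I) ∧
    (∀ j, P j = 1 ∨ P j = sx ∨ P j = sy ∨ P j = sz) ∧
    M = c • Matrix.of fun x y => ∏ j, P j (x j) (y j)

/-- `S` is an n-qubit stabilizer group: an abelian subgroup of the n-qubit Pauli group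
with exactly 2^n elements, not containing −𝟙. -/
def IsStabilizerGroup (n : ℕ)
    (S : Set (Matrix (Fin n → Fin 2) (Fin n → Fin 2) ℂ)) : Prop :=
  (∀ M ∈ S, IsPauli n M) ∧
  (1 : Matrix (Fin n → Fin 2) (Fin n → Fin 2) ℂ) ∈ S ∧
  (∀ A ∈ S, ∀ B ∈ S, A * B ∈ S) ∧
  (∀ A ∈ S, ∀ B ∈ S, A * B = B * A) ∧
  S.ncard = 2 ^ n ∧
  (-1 : Matrix (Fin n → Fin 2) (Fin n → Fin 2) ℂ) ∉ S

/-- The inner product ⟨u|v⟩ = Σ_x conj(u x) v x. -/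
def qinner {d : Type*} [Fintype d] (u v : d → ℂ) : ℂ :=
  ∑ x, (starRingEnd ℂ) (u x) * v x

/-- The rank-one projector |v⟩⟨v| as a matrix. -/
def outer {d : Type*} [Fintype d] (v : d → ℂ) : Matrix d d ℂ :=
  Matrix.of fun x y => v x * (starRingEnd ℂ) (v y)

abbrev Mat (n : ℕ) := Matrix (Fin n → Fin 2) (Fin n → Fin 2) ℂ

def tens {n : ℕ} (P : Fin n → Matrix (Fin 2) (Fin 2) ℂ) : Mat n :=
  Matrix.of fun x y => ∏ j, P j (x j) (y j)

lemma tens_mul {n : ℕ} (P Q : Fin n → Matrix (Fin 2) (Fin 2) ℂ) :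
    tens P * tens Q = tens (fun j => P j * Q j) := by
  ext x z
  simp only [tens, Matrix.mul_apply, Matrix.of_apply]
  rw [Finset.prod_univ_sum, Fintype.piFinset_univ]
  exact Finset.sum_congr rfl fun y _ => (Finset.prod_mul_distrib).symm

lemma tens_one {n : ℕ} : tens (fun _ : Fin n => (1 : Matrix (Fin 2) (Fin 2) ℂ)) = 1 := by
  ext x y
  simp only [tens, Matrix.of_apply, Matrix.one_apply]
  by_cases h : x = y
  · subst h; simp
  · rw [if_neg h]
    obtain ⟨j, hj⟩ := Function.ne_iff.mp h
    exact Finset.prod_eq_zero (Finset.mem_univ j) (by simp [Matrix.one_apply, hj])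

lemma trace_tens {n : ℕ} (P : Fin n → Matrix (Fin 2) (Fin 2) ℂ) :
    (tens P).trace = ∏ j, (P j).trace := by
  simp only [Matrix.trace, Matrix.diag, tens, Matrix.of_apply]
  rw [Finset.prod_univ_sum, Fintype.piFinset_univ]

lemma pauli_sq {P : Matrix (Fin 2) (Fin 2) ℂ}
    (hP : P = 1 ∨ P = sx ∨ P = sy ∨ P = sz) : P * P = 1 := by
  rcases hP with h|h|h|h <;> subst h <;>
    norm_num [sx, sy, sz, Matrix.one_fin_two, Matrix.mul_fin_two, Complex.I_mul_I] <;>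
    try exact Matrix.one_fin_two.symm

lemma pauli_pair {P Q : Matrix (Fin 2) (Fin 2) ℂ}
    (hP : P = 1 ∨ P = sx ∨ P = sy ∨ P = sz)
    (hQ : Q = 1 ∨ Q = sx ∨ Q = sy ∨ Q = sz) :
    (P * Q).trace = 0 ∨ (P = Q ∧ (P * Q).trace = 2) := by
  rcases hP with h|h|h|h <;> rcases hQ with h'|h'|h'|h' <;> subst h <;> subst h' <;>
    first
      | exact Or.inr ⟨rfl, by norm_num [sx, sy, sz, Matrix.one_fin_two, Matrix.mul_fin_two,
          Matrix.trace_fin_two_of, Complex.I_mul_I]⟩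
      | exact Or.inl (by norm_num [sx, sy, sz, Matrix.one_fin_two, Matrix.mul_fin_two,
          Matrix.trace_fin_two_of, Complex.I_mul_I, Complex.ext_iff])

lemma one_ne_neg_one {n : ℕ} : (1 : Mat n) ≠ -1 := by
  intro h
  have h2 := congrFun (congrFun h (fun _ => 0)) (fun _ => 0)
  simp [Matrix.one_apply, Matrix.neg_apply] at h2
  exact (by norm_num : (1:ℂ) ≠ -1) h2

lemma stab_form {n : ℕ} {S : Set (Mat n)} (hS : IsStabilizerGroup n S) {s : Mat n}
    (hs : s ∈ S) :
    ∃ (c : ℂ) (P : Fin n → Matrix (Fin 2) (Fin 2) ℂ),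
      (c = 1 ∨ c = -1) ∧ (∀ j, P j = 1 ∨ P j = sx ∨ P j = sy ∨ P j = sz) ∧
      s = c • tens P ∧ s * s = 1 := by
  obtain ⟨hPauli, h1, hmul, _, _, hneg⟩ := hS
  obtain ⟨c, P, hc, hP, heq⟩ := hPauli s hs
  have heq' : s = c • tens P := heq
  have htens : tens P * tens P = 1 := by
    rw [tens_mul]
    rw [show (fun j => P j * P j) = fun _ => (1 : Matrix (Fin 2) (Fin 2) ℂ) from
      funext fun j => pauli_sq (hP j)]
    exact tens_one
  have hsq : s * s = (c * c) • (1 : Mat n) := by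
    rw [heq', Matrix.smul_mul, Matrix.mul_smul, htens, smul_smul]
  have hc2 : c = 1 ∨ c = -1 := by
    rcases hc with h|h|h|h
    · exact Or.inl h
    · exact Or.inr h
    all_goals {
      exfalso
      apply hneg
      have : s * s = -1 := by rw [hsq, h]; simp [Complex.I_mul_I]
      rw [← this]; exact hmul s hs s hs }
  refine ⟨c, P, hc2, hP, heq', ?_⟩
  rw [hsq]
  rcases hc2 with h|h <;> rw [h] <;> simp

lemma mat_self_ne_neg {n : ℕ} {s : Mat n} (h : s * s = 1) : s ≠ -s := by
  intro he
  have : (1 : Mat n) = -1 := by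
    calc (1 : Mat n) = s * s := h.symm
    _ = s * (-s) := by rw [← he]
    _ = -(s * s) := by rw [mul_neg]
    _ = -1 := by rw [h]
  exact one_ne_neg_one this

lemma trace_pair {n : ℕ} {S T : Set (Mat n)} (hS : IsStabilizerGroup n S)
    (hT : IsStabilizerGroup n T) {s t : Mat n} (hs : s ∈ S) (ht : t ∈ T) :
    (s * t).trace = (if t = s then (2:ℂ)^n else 0) - (if t = -s then (2:ℂ)^n else 0) := by
  obtain ⟨c, P, hc, hP, hseq, hss⟩ := stab_form hS hs
  obtain ⟨d, Q, hd, hQ, hteq, htt⟩ := stab_form hT ht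
  have h2n : ((2:ℂ)^n) ≠ 0 := pow_ne_zero _ two_ne_zero
  have htr : (s * t).trace = (c * d) * ∏ j, (P j * Q j).trace := by
    rw [hseq, hteq, Matrix.smul_mul, Matrix.mul_smul, smul_smul, Matrix.trace_smul,
      tens_mul, trace_tens]
    simp [mul_assoc]
  by_cases hPQ : ∀ j, P j = Q j
  · have hPeq : P = Q := funext hPQ
    subst hPeq
    have hts : t = (c * d) • s := by
      rw [hteq, hseq, smul_smul]
      rcases hc with h|h <;> rcases hd with h'|h' <;> rw [h, h'] <;> ring_nf
    have hprod : ∏ j, (P j * P j).trace = (2:ℂ)^n := by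
      have : ∀ j ∈ Finset.univ, (P j * P j).trace = (2:ℂ) := by
        intro j _
        rw [pauli_sq (hP j), Matrix.trace_one]
        simp
      rw [Finset.prod_congr rfl this]
      simp
    have hsne : s ≠ -s := mat_self_ne_neg hss
    rcases hc with h|h <;> rcases hd with h'|h' <;> subst h <;> subst h'
    · have hts' : t = s := by rw [hts]; norm_num
      rw [htr, hprod, if_pos hts', if_neg (fun he => hsne (hts'.symm.trans he))]
      norm_num
    · have hts' : t = -s := by rw [hts]; norm_num
      rw [htr, hprod, if_neg (fun he => hsne (he.symm.trans hts')), if_pos hts']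
      norm_num
    · have hts' : t = -s := by rw [hts]; norm_num
      rw [htr, hprod, if_neg (fun he => hsne (he.symm.trans hts')), if_pos hts']
      norm_num
    · have hts' : t = s := by rw [hts]; norm_num
      rw [htr, hprod, if_pos hts', if_neg (fun he => hsne (hts'.symm.trans he))]
      norm_num
  · push_neg at hPQ
    obtain ⟨j, hj⟩ := hPQ
    have hj0 : (P j * Q j).trace = 0 := by
      rcases pauli_pair (hP j) (hQ j) with h|⟨he, _⟩
      · exact h
      · exact absurd he hj
    have htr0 : (s * t).trace = 0 := by
      rw [htr, Finset.prod_eq_zero (Finset.mem_univ j) hj0, mul_zero]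
    have hts : t ≠ s := by
      intro he
      rw [he, hss, Matrix.trace_one] at htr0
      simp at htr0
    have htns : t ≠ -s := by
      intro he
      rw [he, mul_neg, hss, Matrix.trace_neg, Matrix.trace_one] at htr0
      simp at htr0
    rw [htr0, if_neg hts, if_neg htns, sub_zero]

lemma stab_finite {n : ℕ} {S : Set (Mat n)} (hS : IsStabilizerGroup n S) : S.Finite := by
  by_contra h
  have h0 : S.ncard = 0 := Set.Infinite.ncard h
  rw [hS.2.2.2.2.1] at h0
  exact absurd h0 (pow_ne_zero n (by norm_num : (2:ℕ) ≠ 0))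

lemma plus_minus_disjoint {n : ℕ} {S T : Set (Mat n)}
    (hT : IsStabilizerGroup n T) :
    Disjoint (S ∩ T) {s ∈ S | -s ∈ T} := by
  rw [Set.disjoint_left]
  rintro s ⟨hsS, hsT⟩ ⟨_, hnsT⟩
  obtain ⟨_, _, _, _, hsq⟩ := stab_form hT hsT
  have hmulT := hT.2.2.1
  have hnegT := hT.2.2.2.2.2
  apply hnegT
  have : s * (-s) = -1 := by rw [mul_neg, hsq.2]
  rw [← this]
  exact hmulT s hsT (-s) hnsT

lemma neg_part_card {n : ℕ} {S T : Set (Mat n)} (hS : IsStabilizerGroup n S)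
    (hT : IsStabilizerGroup n T) :
    {s ∈ S | -s ∈ T}.ncard = 0 ∨ {s ∈ S | -s ∈ T}.ncard = (S ∩ T).ncard := by
  rcases Set.eq_empty_or_nonempty {s ∈ S | -s ∈ T} with h|h
  · left; rw [h]; simp
  · right
    obtain ⟨s₀, hs₀S, hs₀T⟩ := h
    obtain ⟨_, _, _, _, _, hs₀sq⟩ := stab_form hS hs₀S
    have hmulS := hS.2.2.1
    have hmulT := hT.2.2.1
    have himg : (fun s => s₀ * s) '' (S ∩ T) = {s ∈ S | -s ∈ T} := by
      ext x
      constructor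
      · rintro ⟨a, ⟨haS, haT⟩, rfl⟩
        refine ⟨hmulS s₀ hs₀S a haS, ?_⟩
        rw [neg_mul_eq_neg_mul]
        exact hmulT (-s₀) hs₀T a haT
      · rintro ⟨hxS, hnxT⟩
        refine ⟨s₀ * x, ⟨hmulS s₀ hs₀S x hxS, ?_⟩, ?_⟩
        · have : s₀ * x = (-s₀) * (-x) := by rw [neg_mul_neg]
          rw [this]
          exact hmulT (-s₀) hs₀T (-x) hnxT
        · show s₀ * (s₀ * x) = x
          rw [← mul_assoc, hs₀sq, one_mul]
    have hinj : Function.Injective (fun s : Mat n => s₀ * s) := by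
      intro a b hab
      simp only at hab
      calc a = 1 * a := (one_mul a).symm
      _ = (s₀ * s₀) * a := by rw [hs₀sq]
      _ = s₀ * (s₀ * a) := by rw [mul_assoc]
      _ = s₀ * (s₀ * b) := by rw [hab]
      _ = (s₀ * s₀) * b := by rw [mul_assoc]
      _ = b := by rw [hs₀sq, one_mul]
    rw [← himg, Set.ncard_image_of_injective _ hinj]

lemma trace_outer_mul_outer {d : Type*} [Fintype d] (u v : d → ℂ) :
    (outer u * outer v).trace = (starRingEnd ℂ) (qinner u v) * qinner u v := by
  have hconj : (starRingEnd ℂ) (qinner u v) = ∑ x, u x * (starRingEnd ℂ) (v x) := by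
    simp [qinner, map_sum]
  rw [hconj, qinner, Finset.sum_mul_sum]
  simp only [Matrix.trace, Matrix.diag, Matrix.mul_apply, outer, Matrix.of_apply]
  exact Finset.sum_congr rfl fun x _ => Finset.sum_congr rfl fun y _ => by ring

theorem stmt14 {n p q : ℕ} (S T : Set (Matrix (Fin n → Fin 2) (Fin n → Fin 2) ℂ))
    (hS : IsStabilizerGroup n S) (hT : IsStabilizerGroup n T)
    (vS vT : (Fin n → Fin 2) → ℂ)
    (hvS : outer vS = ((2 : ℂ) ^ n)⁻¹ • ∑ᶠ s ∈ S, s)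
    (hvT : outer vT = ((2 : ℂ) ^ n)⁻¹ • ∑ᶠ t ∈ T, t)
    (hp : (S ∩ T).ncard = 2 ^ p)
    (hq : ((S ∩ T) ∪ {s ∈ S | -s ∈ T}).ncard = 2 ^ q) :
    (‖qinner vS vT‖) ^ 2
        = (((S ∩ T).ncard : ℝ) - ({s ∈ S | -s ∈ T} :
            Set (Matrix (Fin n → Fin 2) (Fin n → Fin 2) ℂ)).ncard) / 2 ^ n ∧
    (‖qinner vS vT‖) ^ 2 = ((2 : ℝ) ^ (p + 1) - 2 ^ q) / 2 ^ n ∧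
    (q = p ∨ q = p + 1) ∧
    (q = p → (‖qinner vS vT‖) ^ 2 = (2 : ℝ) ^ q / 2 ^ n) ∧
    (q = p + 1 → (‖qinner vS vT‖) ^ 2 = 0) := by
  classical
  have hSfin : S.Finite := stab_finite hS
  have hTfin : T.Finite := stab_finite hT
  have hSmfin : ({s ∈ S | -s ∈ T} : Set (Mat n)).Finite := hSfin.subset fun x hx => hx.1
  have hSTfin : (S ∩ T).Finite := hSfin.inter_of_left T
  have h2n : ((2:ℂ)^n) ≠ 0 := pow_ne_zero _ two_ne_zero
  have h2nR : ((2:ℝ)^n) ≠ 0 := pow_ne_zero _ two_ne_zero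
  have hfsS : (∑ᶠ s ∈ S, s) = ∑ s ∈ hSfin.toFinset, s := by
    have := finsum_mem_coe_finset (s := hSfin.toFinset) (f := fun s : Mat n => s)
    rwa [Set.Finite.coe_toFinset] at this
  have hfsT : (∑ᶠ t ∈ T, t) = ∑ t ∈ hTfin.toFinset, t := by
    have := finsum_mem_coe_finset (s := hTfin.toFinset) (f := fun t : Mat n => t)
    rwa [Set.Finite.coe_toFinset] at this
  have hPlus : (hSfin.toFinset.filter (fun s => s ∈ hTfin.toFinset)).card = (S ∩ T).ncard := by
    rw [Set.ncard_eq_toFinset_card _ hSTfin]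
    congr 1
    ext x
    simp [Set.Finite.mem_toFinset]
  have hMinus : (hSfin.toFinset.filter (fun s => -s ∈ hTfin.toFinset)).card
      = ({s ∈ S | -s ∈ T} : Set (Mat n)).ncard := by
    rw [Set.ncard_eq_toFinset_card _ hSmfin]
    congr 1
    ext x
    simp [Set.Finite.mem_toFinset]
  have key : (starRingEnd ℂ) (qinner vS vT) * qinner vS vT
      = (((S ∩ T).ncard : ℂ) - (({s ∈ S | -s ∈ T} : Set (Mat n)).ncard : ℂ)) / 2^n := by
    rw [← trace_outer_mul_outer, hvS, hvT, hfsS, hfsT]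
    rw [Matrix.smul_mul, Matrix.mul_smul, smul_smul, Matrix.trace_smul]
    rw [Finset.sum_mul_sum, Matrix.trace_sum]
    have hea : ∀ s ∈ hSfin.toFinset, (∑ t ∈ hTfin.toFinset, s * t).trace
        = (if s ∈ hTfin.toFinset then (2:ℂ)^n else 0)
          - (if -s ∈ hTfin.toFinset then (2:ℂ)^n else 0) := by
      intro s hsmem
      rw [Matrix.trace_sum]
      have hterm : ∀ t ∈ hTfin.toFinset, (s*t).trace
          = (if t = s then (2:ℂ)^n else 0) - (if t = -s then (2:ℂ)^n else 0) :=
        fun t htmem => trace_pair hS hT (hSfin.mem_toFinset.mp hsmem)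
          (hTfin.mem_toFinset.mp htmem)
      rw [Finset.sum_congr rfl hterm, Finset.sum_sub_distrib,
        Finset.sum_ite_eq' hTfin.toFinset s (fun _ => (2:ℂ)^n),
        Finset.sum_ite_eq' hTfin.toFinset (-s) (fun _ => (2:ℂ)^n)]
    rw [Finset.sum_congr rfl hea, Finset.sum_sub_distrib]
    have e1 : ∑ s ∈ hSfin.toFinset, (if s ∈ hTfin.toFinset then (2:ℂ)^n else 0)
        = ((S ∩ T).ncard : ℂ) * 2^n := by
      rw [← Finset.sum_filter, Finset.sum_const, nsmul_eq_mul, hPlus]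
    have e2 : ∑ s ∈ hSfin.toFinset, (if -s ∈ hTfin.toFinset then (2:ℂ)^n else 0)
        = (({s ∈ S | -s ∈ T} : Set (Mat n)).ncard : ℂ) * 2^n := by
      rw [← Finset.sum_filter, Finset.sum_const, nsmul_eq_mul, hMinus]
    rw [e1, e2]
    field_simp
    ring_nf
    simp only [mul_assoc, inv_pow]
    rw [inv_mul_cancel₀ (pow_ne_zero _ two_ne_zero), mul_one, mul_one]
  have hcast : ((Complex.normSq (qinner vS vT) : ℂ))
      = (((S ∩ T).ncard : ℂ) - (({s ∈ S | -s ∈ T} : Set (Mat n)).ncard : ℂ)) / 2^n := by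
    calc ((Complex.normSq (qinner vS vT) : ℂ))
        = qinner vS vT * (starRingEnd ℂ) (qinner vS vT) := (Complex.mul_conj _).symm
      _ = (starRingEnd ℂ) (qinner vS vT) * qinner vS vT := mul_comm _ _
      _ = _ := key
  have habs : (‖qinner vS vT‖) ^ 2
      = (((S ∩ T).ncard : ℝ) - (({s ∈ S | -s ∈ T} : Set (Mat n)).ncard : ℝ)) / 2^n := by
    rw [Complex.sq_norm]
    exact_mod_cast hcast
  have hunion : 2^q = 2^p + ({s ∈ S | -s ∈ T} : Set (Mat n)).ncard := by
    rw [← hq, Set.ncard_union_eq (plus_minus_disjoint hT) hSTfin hSmfin, hp]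
  have hcase : ({s ∈ S | -s ∈ T} : Set (Mat n)).ncard = 0
      ∨ ({s ∈ S | -s ∈ T} : Set (Mat n)).ncard = 2^p := by
    rcases neg_part_card hS hT with h|h
    · exact Or.inl h
    · exact Or.inr (by rw [h, hp])
  have hpR : ((S ∩ T).ncard : ℝ) = 2^p := by exact_mod_cast hp
  have hunionR : (2:ℝ)^q = 2^p + (({s ∈ S | -s ∈ T} : Set (Mat n)).ncard : ℝ) := by
    exact_mod_cast hunion
  refine ⟨habs, ?_, ?_, ?_, ?_⟩
  · rw [habs]
    congr 1
    rw [hpR]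
    have h2s : (2:ℝ)^(p+1) = 2 * 2^p := by rw [pow_succ]; ring
    linarith
  · rcases hcase with h|h
    · left
      rw [h, add_zero] at hunion
      exact Nat.pow_right_injective (le_refl 2) hunion
    · right
      rw [h] at hunion
      have : (2:ℕ)^q = 2^(p+1) := by rw [hunion, pow_succ]; ring
      exact Nat.pow_right_injective (le_refl 2) this
  · intro hqp
    subst hqp
    have hm0 : ({s ∈ S | -s ∈ T} : Set (Mat n)).ncard = 0 := by omega
    rw [habs, hpR, hm0]
    norm_num
  · intro hqp
    subst hqp
    have h2s : (2:ℕ)^(p+1) = 2^p + 2^p := by rw [pow_succ]; ring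
    have hm : ({s ∈ S | -s ∈ T} : Set (Mat n)).ncard = 2^p := by omega
    rw [habs, hpR, hm]
    push_cast
    simp
end
end

section
/- For every n ≥ 1, every n×n symmetric 0-1 matrix A with zero diagonal, and every y ∈ {0,1}^n, the number 2^{n−1}·R_n(y,A) is an integer, where R_n(y,A) = 2^{−n} Σ_{x∈{0,1}^n} (−1)^{Σ_i y_i x_i + Σ_{i<j} x_i A_{ij} x_j}. Consequently, for odd n, max_y |R_n(y,A)| ≠ 2^{−n/2}, i.e., the Maassen–Uffink relation for the corresponding graph state bases is never maximally strong for an odd number of qubits. -/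
/-!
STATEMENT 16: For every n ≥ 1, every n×n symmetric 0-1 matrix A with zero diagonal and
every y ∈ {0,1}^n, the number 2^{n−1}·R_n(y,A) is an integer.  Consequently, for odd n,
max_y |R_n(y,A)| ≠ 2^{−n/2} — the Maassen–Uffink relation for the corresponding graph
state bases is never maximally strong for an odd number of qubits.
-/

noncomputable section

/-- The overlaps R_n(y, A) = 2^{−n} Σ_{x∈{0,1}^n} (−1)^{Σ_i y_i x_i + Σ_{i<j} x_i A_{ij} x_j}
of the standard basis with the Hadamard-transformed graph state of the graph with
adjacency matrix A.  Bit strings and matrix entries are elements of ZMod 2, and the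
exponent is computed in ℕ from the 0/1 representatives (`ZMod.val`). -/
def graphR (n : ℕ) (y : Fin n → ZMod 2) (A : Matrix (Fin n) (Fin n) (ZMod 2)) : ℝ :=
  ((2 : ℝ) ^ n)⁻¹ * ∑ x : Fin n → ZMod 2,
    (-1 : ℝ) ^ (∑ i, (y i * x i).val +
      ∑ i, ∑ j ∈ Finset.Ioi i, (x i * A i j * x j).val)

theorem stmt16 (n : ℕ) (hn : 1 ≤ n)
    (A : Matrix (Fin n) (Fin n) (ZMod 2))
    (hsymm : A.IsSymm) (hdiag : ∀ i, A i i = 0) :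
    (∀ y : Fin n → ZMod 2, ∃ z : ℤ, (2 : ℝ) ^ (n - 1) * graphR n y A = z) ∧
    (Odd n → (⨆ y : Fin n → ZMod 2, |graphR n y A|) ≠ (2 : ℝ) ^ (-(n : ℝ) / 2)) := by
  have key : ∀ y : Fin n → ZMod 2, ∃ z : ℤ, (2 : ℝ) ^ (n - 1) * graphR n y A = z := by
    intro y
    set e : (Fin n → ZMod 2) → ℕ := fun x => ∑ i, (y i * x i).val +
      ∑ i, ∑ j ∈ Finset.Ioi i, (x i * A i j * x j).val with he
    set S : ℤ := ∑ x : Fin n → ZMod 2, (-1 : ℤ) ^ (e x) with hS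
    have hcast : graphR n y A = ((2 : ℝ) ^ n)⁻¹ * (S : ℝ) := by
      rw [graphR, hS]
      push_cast
      rfl
    have hS0 : (S : ZMod 2) = 0 := by
      rw [hS]
      push_cast
      have h1 : (-1 : ZMod 2) = 1 := by decide
      simp only [h1, one_pow, Finset.sum_const, Finset.card_univ, nsmul_eq_mul, mul_one]
      have hc : Fintype.card (Fin n → ZMod 2) = 2 ^ n := by simp
      rw [hc]
      have h2 : (2 : ZMod 2) = 0 := by decide
      push_cast
      rw [h2, zero_pow (by omega)]
    have h2 : (2 : ℤ) ∣ S := by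
      have := (ZMod.intCast_zmod_eq_zero_iff_dvd S 2).mp hS0
      exact_mod_cast this
    obtain ⟨w, hw⟩ := h2
    refine ⟨w, ?_⟩
    rw [hcast, hw]
    have hne : (2 : ℝ) ^ n ≠ 0 := by positivity
    have hnn : (2 : ℝ) ^ n = 2 ^ (n - 1) * 2 := by
      rw [← pow_succ]
      congr 1
      omega
    push_cast
    rw [hnn]
    field_simp
  refine ⟨key, fun hodd hsup => ?_⟩
  obtain ⟨y₀, hy₀⟩ := Finite.exists_max (fun y : Fin n → ZMod 2 => |graphR n y A|)
  have hval : (⨆ y, |graphR n y A|) = |graphR n y₀ A| :=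
    le_antisymm (ciSup_le hy₀) (le_ciSup (f := fun y => |graphR n y A|) (Finite.bddAbove_range _) y₀)
  obtain ⟨z, hz⟩ := key y₀
  have h1 : (z.natAbs : ℝ) = (2 : ℝ) ^ (n - 1) * (2 : ℝ) ^ (-(n : ℝ) / 2) := by
    have h : |(2 : ℝ) ^ (n - 1) * graphR n y₀ A| = |(z : ℝ)| := by rw [hz]
    rw [abs_mul, abs_pow, abs_two] at h
    rw [← hval, hsup] at h
    rw [Nat.cast_natAbs]
    push_cast
    exact h.symm
  -- square it
  have hsq : ((z.natAbs : ℝ)) ^ 2 * (2 : ℝ) ^ n = ((2 : ℝ) ^ (n - 1)) ^ 2 := by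
    rw [h1]
    have : ((2 : ℝ) ^ (-(n : ℝ) / 2)) ^ 2 = (2 : ℝ) ^ (-(n : ℝ)) := by
      rw [← Real.rpow_natCast ((2:ℝ) ^ (-(n:ℝ)/2)) 2, ← Real.rpow_mul (by norm_num)]
      norm_num
    rw [mul_pow, mul_assoc, this]
    have h2 : (2 : ℝ) ^ (-(n : ℝ)) * (2 : ℝ) ^ n = 1 := by
      rw [← Real.rpow_natCast (2:ℝ) n, ← Real.rpow_add (by norm_num)]
      norm_num
    rw [h2, mul_one]
  have hnat : z.natAbs ^ 2 * 2 ^ n = 2 ^ (2 * (n - 1)) := by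
    have : ((z.natAbs ^ 2 * 2 ^ n : ℕ) : ℝ) = ((2 ^ (2 * (n - 1)) : ℕ) : ℝ) := by
      push_cast
      rw [hsq]
      rw [pow_mul']
    exact_mod_cast this
  have hdvd : z.natAbs ∣ 2 ^ (2 * (n - 1)) := by
    exact hnat ▸ (dvd_pow_self z.natAbs two_ne_zero).mul_right (2 ^ n)
  obtain ⟨k, hk, hak⟩ := (Nat.dvd_prime_pow Nat.prime_two).mp hdvd
  rw [hak, ← pow_mul, ← pow_add] at hnat
  have := Nat.pow_right_injective (le_refl 2) hnat
  obtain ⟨m, hm⟩ := hodd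
  omega
end
end

section
/- Let n ≥ 2 be even and let A be the adjacency matrix of the complete graph on n vertices (A_{ij} = 1 for i ≠ j, A_{ii} = 0). Then for every y ∈ {0,1}^n, |R_n(y,A)| = 2^{−n/2}, where R_n(y,A) = 2^{−n} Σ_{x∈{0,1}^n} (−1)^{Σ_i y_i x_i + Σ_{i<j} x_i A_{ij} x_j}; that is, R_n(y,A) = ±2^{−n/2} for all y. -/
/-!
STATEMENT 17: Let n ≥ 2 be even and A the adjacency matrix of the complete graph on n
vertices.  Then for every y ∈ {0,1}^n, |R_n(y,A)| = 2^{−n/2}, i.e. R_n(y,A) = ±2^{−n/2}.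
-/

noncomputable section

open Finset Complex

lemma aux_val_mul : ∀ u v : ZMod 2, (u * v).val = u.val * v.val := by decide

lemma aux_val_le : ∀ u : ZMod 2, u.val ≤ 1 := by decide

lemma aux_choose (k : ℕ) : 2 * k.choose 2 + k = k ^ 2 := by
  induction k with
  | zero => rfl
  | succ k ih => rw [Nat.choose_succ_succ, Nat.choose_one_right]; ring_nf; ring_nf at ih; omega

lemma aux_pairsum (n : ℕ) (a : Fin n → ℕ) (ha : ∀ i, a i ≤ 1) :
    ∑ i, ∑ j ∈ Finset.Ioi i, a i * a j = (∑ i, a i).choose 2 := by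
  have h := Finset.sum_sum_Ioi_add_eq_sum_sum_off_diag (fun i j => a i * a j) (α := Fin n)
  have hself : ∀ i : Fin n, a i * a i = a i := by
    intro i; rcases Nat.le_one_iff_eq_zero_or_eq_one.mp (ha i) with h' | h' <;> simp [h']
  have h2 : ∀ i : Fin n, (∑ j ∈ ({i}ᶜ : Finset (Fin n)), a j * a i) + a i * a i
      = (∑ j, a j) * a i := by
    intro i
    rw [Finset.sum_mul, ← Finset.sum_compl_add_sum ({i} : Finset (Fin n))
      (fun j => a j * a i), Finset.sum_singleton]
  have hL : ∑ i, ∑ j ∈ Finset.Ioi i, (a j * a i + a i * a j)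
      = 2 * ∑ i, ∑ j ∈ Finset.Ioi i, a i * a j := by
    rw [two_mul, ← Finset.sum_add_distrib]
    congr 1; ext i; rw [← Finset.sum_add_distrib]
    congr 1; ext j; ring
  have key : (∑ i, a i) ^ 2 = 2 * (∑ i, ∑ j ∈ Finset.Ioi i, a i * a j) + ∑ i, a i :=
    calc (∑ i, a i) ^ 2 = ∑ i : Fin n, (∑ j, a j) * a i := by rw [← Finset.mul_sum, sq]
      _ = ∑ i, ((∑ j ∈ ({i}ᶜ : Finset (Fin n)), a j * a i) + a i * a i) :=
          Finset.sum_congr rfl fun i _ => (h2 i).symm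
      _ = (∑ i, ∑ j ∈ ({i}ᶜ : Finset (Fin n)), a j * a i) + ∑ i, a i * a i :=
          Finset.sum_add_distrib
      _ = 2 * (∑ i, ∑ j ∈ Finset.Ioi i, a i * a j) + ∑ i, a i := by
          congr 1
          · rw [← hL]; convert h.symm using 2 with i _
          · exact Finset.sum_congr rfl fun i _ => hself i
  have hc := aux_choose (∑ i, a i)
  omega

lemma aux_key (k : ℕ) : (1 + I) * (-I) ^ k = ((-1 : ℂ)) ^ (k.choose 2) * (1 + (-1) ^ k * I) := by
  induction k with
  | zero => simp
  | succ k ih =>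
    rw [pow_succ, ← mul_assoc, ih, Nat.choose_succ_succ, Nat.choose_one_right, pow_add, pow_succ]
    rcases Nat.even_or_odd k with h | h <;>
    · rw [h.neg_one_pow]; push_cast [h.neg_one_pow]; ring_nf; rw [I_sq]; ring

lemma aux_pointwise (n : ℕ) (y x : Fin n → ZMod 2) :
    ((-1 : ℝ)) ^ (∑ i, (y i * x i).val + ∑ i, ∑ j ∈ Finset.Ioi i, (x i * x j).val)
      = ((1 + I) * ∏ j, (((-1 : ℂ) ^ ((y j).val)) * (-I)) ^ ((x j).val)).re := by
  set a : Fin n → ℕ := fun i => (x i).val with ha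
  have h1 : ∀ i, (y i * x i).val = (y i).val * a i := fun i => aux_val_mul _ _
  have h2 : ∑ i, ∑ j ∈ Finset.Ioi i, (x i * x j).val
      = (∑ i, a i).choose 2 := by
    rw [← aux_pairsum n a (fun i => aux_val_le _)]
    exact Finset.sum_congr rfl fun i _ => Finset.sum_congr rfl fun j _ => aux_val_mul _ _
  have h3 : (∏ j, (((-1 : ℂ) ^ ((y j).val)) * (-I)) ^ (a j))
      = (-1 : ℂ) ^ (∑ i, (y i).val * a i) * (-I) ^ (∑ i, a i) := by
    rw [← Finset.prod_pow_eq_pow_sum, ← Finset.prod_pow_eq_pow_sum, ← Finset.prod_mul_distrib]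
    exact Finset.prod_congr rfl fun j _ => by rw [mul_pow, pow_mul]
  simp only [h1, h2]
  rw [h3, ← mul_assoc, mul_comm (1 + I), mul_assoc, aux_key, ← mul_assoc, ← pow_add]
  rcases Nat.even_or_odd (∑ i, a i) with h | h <;>
    rcases Nat.even_or_odd (∑ i, (y i).val * a i + (∑ i, a i).choose 2) with h' | h' <;>
    simp [h.neg_one_pow, h'.neg_one_pow]

lemma aux_sum_eq (n : ℕ) (y : Fin n → ZMod 2) :
    (∑ x : Fin n → ZMod 2, ((1 + I) * ∏ j, (((-1 : ℂ) ^ ((y j).val)) * (-I)) ^ ((x j).val)))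
      = (1 + I) * ∏ j, (1 - ((-1 : ℂ) ^ ((y j).val)) * I) := by
  rw [← Finset.mul_sum]
  congr 1
  have h := Finset.prod_univ_sum (fun _ : Fin n => (Finset.univ : Finset (ZMod 2)))
    (fun j v => (((-1 : ℂ) ^ ((y j).val)) * (-I)) ^ (v.val))
  rw [Fintype.piFinset_univ] at h
  rw [← h]
  refine Finset.prod_congr rfl fun j _ => ?_
  have huniv : (Finset.univ : Finset (ZMod 2)) = {0, 1} := by decide
  rw [huniv, Finset.sum_insert (by decide), Finset.sum_singleton]
  have h0 : (0 : ZMod 2).val = 0 := rfl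
  have h1 : (1 : ZMod 2).val = 1 := rfl
  rw [h0, h1, pow_zero, pow_one]
  ring

lemma aux_eps_sq (v : ℕ) : ((-1 : ℂ) ^ v) * ((-1 : ℂ) ^ v) = 1 := by
  rcases Nat.even_or_odd v with h | h <;> simp [h.neg_one_pow]

lemma aux_conj_factor (v : ℕ) : (starRingEnd ℂ) (1 - ((-1 : ℂ) ^ v) * I)
    = (((-1 : ℂ) ^ v) * I) * (1 - ((-1 : ℂ) ^ v) * I) := by
  have hsq := aux_eps_sq v
  have hc : (starRingEnd ℂ) ((-1 : ℂ) ^ v) = (-1 : ℂ) ^ v := by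
    rcases Nat.even_or_odd v with h | h <;> simp [h.neg_one_pow]
  rw [map_sub, map_one, map_mul, hc, Complex.conj_I]
  have : (((-1:ℂ)^v) * I) * (1 - ((-1:ℂ)^v) * I)
      = ((-1:ℂ)^v) * I + (((-1:ℂ)^v) * ((-1:ℂ)^v)) := by ring_nf; rw [I_sq]; ring
  rw [this, hsq]; ring

lemma aux_conj (n : ℕ) (y : Fin n → ZMod 2) :
    (starRingEnd ℂ) ((1 + I) * ∏ j, (1 - ((-1 : ℂ) ^ ((y j).val)) * I))
      = ((-I) * (I ^ n * ((-1 : ℂ) ^ (∑ j, (y j).val))))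
        * ((1 + I) * ∏ j, (1 - ((-1 : ℂ) ^ ((y j).val)) * I)) := by
  rw [map_mul, map_prod]
  have h1 : (starRingEnd ℂ) (1 + I) = (-I) * (1 + I) := by
    rw [map_add, map_one, Complex.conj_I]
    have : (-I) * (1 + I) = -I - I*I := by ring
    rw [this, Complex.I_mul_I]; ring
  have h2 : ∏ j, (starRingEnd ℂ) (1 - ((-1 : ℂ) ^ ((y j).val)) * I)
      = (I ^ n * ((-1 : ℂ) ^ (∑ j, (y j).val))) * ∏ j, (1 - ((-1 : ℂ) ^ ((y j).val)) * I) := by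
    calc ∏ j, (starRingEnd ℂ) (1 - ((-1 : ℂ) ^ ((y j).val)) * I)
        = ∏ j, ((((-1 : ℂ) ^ ((y j).val)) * I) * (1 - ((-1 : ℂ) ^ ((y j).val)) * I)) :=
          Finset.prod_congr rfl fun j _ => aux_conj_factor _
      _ = (∏ j, (((-1 : ℂ) ^ ((y j).val)) * I)) * ∏ j, (1 - ((-1 : ℂ) ^ ((y j).val)) * I) :=
          Finset.prod_mul_distrib
      _ = (I ^ n * ((-1 : ℂ) ^ (∑ j, (y j).val))) * ∏ j, (1 - ((-1 : ℂ) ^ ((y j).val)) * I) := by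
          rw [Finset.prod_mul_distrib, Finset.prod_const, Finset.card_univ, Fintype.card_fin,
            Finset.prod_pow_eq_pow_sum]
          ring
  rw [h1, h2]; ring

lemma aux_normSq (n : ℕ) (y : Fin n → ZMod 2) :
    Complex.normSq ((1 + I) * ∏ j, (1 - ((-1 : ℂ) ^ ((y j).val)) * I)) = 2 ^ (n + 1) := by
  rw [map_mul, map_prod]
  have h1 : Complex.normSq (1 + I) = 2 := by simp [Complex.normSq_apply]; norm_num
  have h2 : ∀ j : Fin n, Complex.normSq (1 - ((-1 : ℂ) ^ ((y j).val)) * I) = 2 := by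
    intro j
    rcases Nat.even_or_odd ((y j).val) with h | h <;>
    · simp [h.neg_one_pow, Complex.normSq_apply]; norm_num
  rw [h1, Finset.prod_congr rfl fun j _ => h2 j, Finset.prod_const, Finset.card_univ,
    Fintype.card_fin]
  ring

theorem stmt17 (n : ℕ) (hn : 2 ≤ n) (heven : Even n)
    (A : Matrix (Fin n) (Fin n) (ZMod 2))
    (hA : ∀ i j, A i j = if i = j then 0 else 1)
    (y : Fin n → ZMod 2) :
    |graphR n y A| = (2 : ℝ) ^ (-(n : ℝ) / 2) := by
  obtain ⟨m, hm⟩ := heven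
  subst hm
  set P : ℂ := (1 + I) * ∏ j, (1 - ((-1 : ℂ) ^ ((y j).val)) * I) with hP
  have hS : (∑ x : Fin (m + m) → ZMod 2, (-1 : ℝ) ^ (∑ i, (y i * x i).val +
      ∑ i, ∑ j ∈ Finset.Ioi i, (x i * A i j * x j).val)) = P.re := by
    have hAx : ∀ x : Fin (m + m) → ZMod 2, (∑ i, ∑ j ∈ Finset.Ioi i, (x i * A i j * x j).val)
        = ∑ i, ∑ j ∈ Finset.Ioi i, (x i * x j).val := by
      intro x
      refine Finset.sum_congr rfl fun i _ => Finset.sum_congr rfl fun j hj => ?_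
      rw [hA i j, if_neg (Finset.mem_Ioi.mp hj).ne, mul_one]
    calc (∑ x : Fin (m + m) → ZMod 2, (-1 : ℝ) ^ (∑ i, (y i * x i).val +
          ∑ i, ∑ j ∈ Finset.Ioi i, (x i * A i j * x j).val))
        = ∑ x : Fin (m + m) → ZMod 2,
            ((1 + I) * ∏ j, (((-1:ℂ)^((y j).val)) * (-I)) ^ ((x j).val)).re := by
          refine Finset.sum_congr rfl fun x _ => ?_
          rw [hAx x]; exact aux_pointwise (m + m) y x
      _ = (∑ x : Fin (m + m) → ZMod 2,
            ((1 + I) * ∏ j, (((-1:ℂ)^((y j).val)) * (-I)) ^ ((x j).val))).re :=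
          (Complex.re_sum _ _).symm
      _ = P.re := by rw [aux_sum_eq]
  set c : ℝ := (-1 : ℝ) ^ (m + ∑ j, (y j).val) with hc
  have hcsq : c ^ 2 = 1 := by
    rw [hc, ← pow_mul, mul_comm, pow_mul]; norm_num
  have hIn : (I : ℂ) ^ (m + m) * ((-1 : ℂ) ^ (∑ j, (y j).val)) = (c : ℂ) := by
    have h1 : (I : ℂ) ^ (m + m) = (-1 : ℂ) ^ m := by
      rw [← two_mul, pow_mul, I_sq]
    rw [h1, hc, ← pow_add]
    push_cast
    ring
  have hconj := aux_conj (m + m) y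
  rw [hIn, ← hP] at hconj
  have hre : P.re = c * P.im := by
    have h2 := congrArg Complex.re hconj
    simpa [Complex.mul_re, Complex.mul_im] using h2
  have hnorm : P.re ^ 2 + P.im ^ 2 = 2 ^ (m + m + 1) := by
    have h3 := aux_normSq (m + m) y
    rw [← hP, Complex.normSq_apply] at h3
    rw [← h3]; ring
  have hu2 : P.re ^ 2 = 2 ^ (m + m) := by
    have him : P.im ^ 2 = P.re ^ 2 := by rw [hre, mul_pow, hcsq, one_mul]
    rw [him] at hnorm
    have h4 : (2:ℝ) ^ (m + m + 1) = 2 ^ (m + m) * 2 := pow_succ 2 (m + m)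
    linarith
  have habs : |P.re| = 2 ^ m := by
    rw [← Real.sqrt_sq_eq_abs, hu2, show (2:ℝ)^(m+m) = ((2:ℝ)^m)^2 by rw [pow_add, sq],
      Real.sqrt_sq (by positivity)]
  have hrpow : (2 : ℝ) ^ (-((m : ℝ) + m) / 2) = ((2 : ℝ) ^ m)⁻¹ := by
    rw [show -((m : ℝ) + m) / 2 = -(m : ℝ) by ring, Real.rpow_neg (by norm_num),
      Real.rpow_natCast]
  rw [graphR, hS]
  push_cast
  rw [abs_mul, abs_inv, _root_.abs_of_nonneg (by positivity : (0:ℝ) ≤ (2:ℝ) ^ (m+m)), habs,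
    hrpow, pow_add]
  field_simp
end
end

section
/- Let n ≥ 1 be odd and let A be the adjacency matrix of the complete graph on n vertices (A_{ij} = 1 for i ≠ j, A_{ii} = 0). Then for every y ∈ {0,1}^n, R_n(y,A) ∈ {0, 2^{−(n−1)/2}, −2^{−(n−1)/2}}, where R_n(y,A) = 2^{−n} Σ_{x∈{0,1}^n} (−1)^{Σ_i y_i x_i + Σ_{i<j} x_i A_{ij} x_j}. -/
/-!
STATEMENT 18: Let n ≥ 1 be odd and A the adjacency matrix of the complete graph on n
vertices.  Then for every y ∈ {0,1}^n, R_n(y,A) ∈ {0, 2^{−(n−1)/2}, −2^{−(n−1)/2}}.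
-/

noncomputable section

open Complex Finset

private lemma keyI18 : ∀ w d : ℕ, w + 2 * d = w * w →
    ((-1 : ℂ)) ^ d = ((1 - I) * I ^ w + (1 + I) * (-I) ^ w) / 2 := by
  intro w
  induction w using Nat.strong_induction_on with
  | _ w IH =>
    intro d hd
    rcases lt_or_ge w 4 with hw | hw
    · interval_cases w
      · obtain rfl : d = 0 := by omega
        norm_num
      · obtain rfl : d = 0 := by omega
        simp [Complex.ext_iff, pow_succ]
      · obtain rfl : d = 1 := by omega
        simp [Complex.ext_iff, pow_succ]
      · obtain rfl : d = 3 := by omega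
        simp [Complex.ext_iff, pow_succ]
    · obtain ⟨s, rfl⟩ : ∃ s, w = s + 4 := ⟨w - 4, by omega⟩
      have hr : (s + 4) * (s + 4) = s * s + 8 * s + 16 := by ring
      rw [hr] at hd
      have hs : s ≤ s * s := by nlinarith
      have h12 : 4 * s + 6 ≤ d ∧ s + 2 * (d - (4 * s + 6)) = s * s := by
        generalize s * s = a at hs hd ⊢; omega
      have := IH s (by omega) (d - (4 * s + 6)) h12.2
      rw [show d = (d - (4 * s + 6)) + (4 * s + 6) by omega, pow_add, this]
      have e1 : (-1 : ℂ) ^ (4 * s + 6) = 1 := by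
        rw [show 4 * s + 6 = 2 * (2 * s + 3) by ring, pow_mul]; norm_num
      have e2 : (I : ℂ) ^ (s + 4) = I ^ s := by
        rw [pow_add, Complex.I_pow_four, mul_one]
      have e3 : ((-I : ℂ)) ^ (s + 4) = (-I) ^ s := by
        rw [pow_add, show ((-I:ℂ))^4 = I^4 by ring, Complex.I_pow_four, mul_one]
      rw [e1, e2, e3, mul_one]

private lemma sqsum18 {n : ℕ} (v : Fin n → ℕ) (hv : ∀ i, v i * v i = v i) :
    (∑ i, v i) + 2 * ∑ i, ∑ j ∈ Ioi i, v i * v j = (∑ i, v i) * (∑ i, v i) := by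
  have h := Finset.sum_sum_Ioi_add_eq_sum_sum_off_diag (fun i j => v i * v j)
  have h2 : (∑ i, ∑ j ∈ Ioi i, ((fun i j => v i * v j) j i + v i * v j))
      = 2 * ∑ i, ∑ j ∈ Ioi i, v i * v j := by
    rw [Finset.mul_sum]
    refine Finset.sum_congr rfl fun i _ => ?_
    rw [Finset.mul_sum]
    exact Finset.sum_congr rfl fun j _ => by ring
  rw [h2] at h
  rw [h, Finset.sum_mul_sum, ← Finset.sum_add_distrib]
  refine Finset.sum_congr rfl fun i _ => ?_
  have h4 := Finset.sum_compl_add_sum ({i} : Finset (Fin n)) (fun j => v j * v i)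
  simp only [Finset.sum_singleton] at h4
  rw [hv i] at h4
  rw [add_comm]
  convert h4.trans (Finset.sum_congr rfl fun j _ => mul_comm (v j) (v i)) using 2


theorem stmt18 (n : ℕ) (hn : 1 ≤ n) (hodd : Odd n)
    (A : Matrix (Fin n) (Fin n) (ZMod 2))
    (hA : ∀ i j, A i j = if i = j then 0 else 1)
    (y : Fin n → ZMod 2) :
    graphR n y A = 0 ∨
    graphR n y A = (2 : ℝ) ^ (-((n : ℝ) - 1) / 2) ∨
    graphR n y A = -((2 : ℝ) ^ (-((n : ℝ) - 1) / 2)) := by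
  classical
  obtain ⟨m, hm⟩ := hodd
  set k := (univ.filter (fun i => y i = 1)).card with hk
  set l := (univ.filter (fun i => ¬ y i = 1)).card with hl
  have hkl : k + l = n := by
    rw [hk, hl, Finset.card_filter_add_card_filter_not, Finset.card_univ,
      Fintype.card_fin]
  have hkle : k ≤ n := by
    rw [hk]
    exact le_trans (Finset.card_filter_le _ _) (by simp)
  have hvmul : ∀ a b : ZMod 2, (a*b).val = a.val * b.val := by decide
  have hvsq : ∀ a : ZMod 2, a.val * a.val = a.val := by decide
  have hval01 : ∀ a : ZMod 2, a = 0 ∨ a = 1 := by decide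
  -- per-x term identity
  have hterm : ∀ x : Fin n → ZMod 2,
      ((-1 : ℂ)) ^ (∑ i, (y i * x i).val + ∑ i, ∑ j ∈ Finset.Ioi i, (x i * A i j * x j).val)
        = ((1 - I) * ((-1)^(∑ i, (y i * x i).val) * I ^ (∑ i, (x i).val))
           + (1 + I) * ((-1)^(∑ i, (y i * x i).val) * (-I) ^ (∑ i, (x i).val))) / 2 := by
    intro x
    have hQ : ∑ i, ∑ j ∈ Finset.Ioi i, (x i * A i j * x j).val
        = ∑ i, ∑ j ∈ Finset.Ioi i, (x i).val * (x j).val := by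
      refine Finset.sum_congr rfl fun i _ => Finset.sum_congr rfl fun j hj => ?_
      have hij : i ≠ j := (Finset.mem_Ioi.mp hj).ne
      rw [hA i j, if_neg hij, mul_one, hvmul]
    rw [hQ, pow_add]
    have hw := sqsum18 (fun i => (x i).val) (fun i => hvsq (x i))
    rw [keyI18 (∑ i, (x i).val) (∑ i, ∑ j ∈ Finset.Ioi i, (x i).val * (x j).val) hw]
    ring
  -- factorization of the linear sums
  have hf : ∀ (c : ℂ), (∑ x : Fin n → ZMod 2,
      ((-1:ℂ))^(∑ i, (y i * x i).val) * c ^ (∑ i, (x i).val))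
      = ∏ i, (1 + (-1:ℂ)^((y i).val) * c) := by
    intro c
    have h1 : ∀ x : Fin n → ZMod 2, ((-1:ℂ))^(∑ i, (y i * x i).val) * c ^ (∑ i, (x i).val)
        = ∏ i, (((-1:ℂ))^((y i * x i).val) * c ^ ((x i).val)) := by
      intro x
      rw [Finset.prod_mul_distrib, Finset.prod_pow_eq_pow_sum, Finset.prod_pow_eq_pow_sum]
    simp_rw [h1]
    rw [show (Finset.univ : Finset (Fin n → ZMod 2))
        = Fintype.piFinset (fun _ => Finset.univ) from (Fintype.piFinset_univ).symm]
    rw [← Finset.prod_univ_sum (fun _ : Fin n => (univ : Finset (ZMod 2)))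
      (fun i b => ((-1:ℂ))^((y i * b).val) * c ^ b.val)]
    refine Finset.prod_congr rfl fun i _ => ?_
    have hu : (Finset.univ : Finset (ZMod 2)) = {0, 1} := by decide
    rw [hu, Finset.sum_pair (by decide)]
    have v0 : (0 : ZMod 2).val = 0 := rfl
    have v1 : (1 : ZMod 2).val = 1 := rfl
    rw [mul_zero, mul_one, v0, v1, pow_zero, pow_zero, pow_one, one_mul]
  have hsplit : ∀ (c : ℂ), (∏ i, (1 + (-1:ℂ)^((y i).val) * c))
      = (1 - c)^k * (1 + c)^l := by
    intro c
    have h1 : ∀ i, (1 + (-1:ℂ)^((y i).val) * c)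
        = if y i = 1 then (1 - c) else (1 + c) := by
      intro i
      rcases hval01 (y i) with h | h <;> rw [h]
      · rw [if_neg (by decide)]
        norm_num [show (0 : ZMod 2).val = 0 from rfl]
      · rw [if_pos rfl]
        norm_num [show (1 : ZMod 2).val = 1 from rfl]
        ring
    simp_rw [h1]
    rw [Finset.prod_ite, Finset.prod_const, Finset.prod_const]
  -- the complex value
  set z : ℂ := (1 + I)^(k+1) * (1 - I)^l with hz
  have hconjz : (starRingEnd ℂ) z = (1 - I)^(k+1) * (1 + I)^l := by
    rw [hz, map_mul, map_pow, map_pow, map_add, map_sub, map_one, Complex.conj_I]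
    ring_nf
  have hsum : (∑ x : Fin n → ZMod 2,
      ((-1 : ℂ)) ^ (∑ i, (y i * x i).val + ∑ i, ∑ j ∈ Finset.Ioi i, (x i * A i j * x j).val))
      = (z + (starRingEnd ℂ) z) / 2 := by
    simp_rw [hterm]
    rw [← Finset.sum_div, Finset.sum_add_distrib, ← Finset.mul_sum, ← Finset.mul_sum,
      hf I, hf (-I), hsplit I, hsplit (-I), hconjz, hz]
    ring
  -- real part extraction
  set Sr : ℝ := ∑ x : Fin n → ZMod 2,
    (-1 : ℝ) ^ (∑ i, (y i * x i).val + ∑ i, ∑ j ∈ Finset.Ioi i, (x i * A i j * x j).val)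
    with hSr
  have hcast : (Sr : ℂ) = (z + (starRingEnd ℂ) z) / 2 := by
    rw [hSr, ← hsum]
    push_cast
    rfl
  have hre : Sr = z.re := by
    have : (Sr : ℂ) = (z.re : ℂ) := by
      rw [hcast, Complex.add_conj]
      push_cast
      ring
    exact_mod_cast this
  -- magnitude of z
  have hA2 : ((1:ℂ)+I)^2 = 2*I := by simp [sq, Complex.ext_iff]; norm_num
  have hB2 : ((1:ℂ)-I)^2 = 2*I^3 := by simp [pow_succ, Complex.ext_iff]; norm_num
  have hAB : ((1:ℂ)+I)*(1-I) = 2 := by simp [Complex.ext_iff]; norm_num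
  have hjz : ∃ j : ℕ, z = 2^(m+1) * I^j := by
    rcases Nat.even_or_odd k with ⟨p, hp⟩ | ⟨p, hp⟩
    · -- k = 2p even, k+1 and l odd
      have hpm : p ≤ m ∧ l = 2*(m-p)+1 := by omega
      set q := m - p with hq
      refine ⟨p + 3*q, ?_⟩
      rw [hz, show k+1 = 2*p+1 by omega, show l = 2*q+1 by omega,
        show m+1 = p+q+1 by omega]
      rw [pow_succ, pow_succ, pow_mul, pow_mul, hA2, hB2]
      linear_combination ((2:ℂ)^p * 2^q * I^p * I^(3*q)) * hAB
    · -- k = 2p+1 odd, k+1 and l even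
      have hpm : p ≤ m ∧ l = 2*(m-p) := by omega
      set q := m - p with hq
      refine ⟨p + 1 + 3*q, ?_⟩
      rw [hz, show k+1 = 2*(p+1) by omega, show l = 2*q by omega,
        show m+1 = (p+1)+q by omega]
      rw [pow_mul, pow_mul, hA2, hB2]
      ring
  obtain ⟨j, hj⟩ := hjz
  have hrez : z.re = 2^(m+1) * (I^j).re := by
    rw [hj]
    have : ((2:ℂ)^(m+1)) = ((2:ℝ)^(m+1) : ℝ) := by push_cast; ring
    rw [this, Complex.re_ofReal_mul]
  have hIj : (I^j).re = 0 ∨ (I^j).re = 1 ∨ (I^j).re = -1 := by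
    have hper : I^j = I^(j % 4) := by
      conv_lhs => rw [← Nat.div_add_mod j 4]
      rw [pow_add, pow_mul, Complex.I_pow_four, one_pow, one_mul]
    rw [hper]
    have h4 : j % 4 < 4 := Nat.mod_lt _ (by norm_num)
    interval_cases h : j % 4 <;> simp [pow_succ]
  -- final assembly
  have hG : graphR n y A = ((2:ℝ)^n)⁻¹ * Sr := rfl
  have hpow : ((2:ℝ)^n)⁻¹ * 2^(m+1) = (2 : ℝ) ^ (-((n : ℝ) - 1) / 2) := by
    have h1 : (-((n : ℝ) - 1) / 2) = -(m:ℝ) := by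
      rw [hm]; push_cast; ring
    rw [h1, Real.rpow_neg (by norm_num), Real.rpow_natCast, hm,
      show 2*m+1 = m + (m+1) by ring, pow_add]
    field_simp
  rcases hIj with h | h | h
  · left
    rw [hG, hre, hrez, h, mul_zero, mul_zero]
  · right; left
    rw [hG, hre, hrez, h, mul_one, hpow]
  · right; right
    rw [hG, hre, hrez, h, ← hpow]
    ring
end
end
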